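/- Let (A, α) and (B, β) be Δ-algebras and h : A → B a Δ-algebra morphism. Then for any Δ-set D ⊆ A, the image h(D) is a Δ-set in B, and h(⋁D) = ⋁ h(D). In other words, morphisms of Δ-algebras automatically preserve suprema of Δ-sets. -/

import Mathlib

/-- A ranked alphabet (signature): a set of symbols with arities. -/
structure Signature where
  symb : Type
  ar : symb → ℕ

/-- A partial Σ-coterm over `X`: a finite or infinite partial Σ-labeled tree
whose internal nodes are labeled by operation symbols (with children indexed by
the arity, some possibly missing) and whose leaves may be labeled by variables
from `X`.  It is represented by its (partial) labeling function on tree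
positions. -/
structure Coterm (σ : Signature) (X : Type*) where
  label : List ℕ → Option (σ.symb ⊕ X)
  consistent : ∀ p i, (label (p ++ [i])).isSome →
    ∃ f, label p = some (Sum.inl f) ∧ i < σ.ar f

namespace Coterm

variable {σ : Signature} {X Y : Type*}

theorem ext' {s t : Coterm σ X} (h : s.label = t.label) : s = t := by
  cases s; cases t; cases h; rfl

/-- The approximation order: `s ≤ t` iff `s` is obtained from `t` by deleting
subterms, i.e. `s` agrees with `t` wherever `s` is defined. -/
instance : PartialOrder (Coterm σ X) where
  le s t := ∀ p v, s.label p = some v → t.label p = some v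
  le_refl s := fun _ _ h => h
  le_trans s t u h₁ h₂ := fun p v h => h₂ p v (h₁ p v h)
  le_antisymm s t h₁ h₂ := by
    apply ext'; funext p
    cases hs : s.label p with
    | some v => exact (h₁ p v hs).symm
    | none =>
      cases ht : t.label p with
      | some v => exact absurd (h₂ p v ht) (by rw [hs]; simp)
      | none => rfl

/-- The empty term `⊥`. -/
instance : OrderBot (Coterm σ X) where
  bot := ⟨fun _ => none, by intro p i h; simp at h⟩
  bot_le t := by intro p v h; simp only at h; exact absurd h (by simp)

@[simp] theorem bot_label (p : List ℕ) : (⊥ : Coterm σ X).label p = none := rfl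

/-- The coterm consisting of a single variable. -/
def var (x : X) : Coterm σ X where
  label p := if p = [] then some (Sum.inr x) else none
  consistent := by
    intro p i h
    try simp only at h
    rw [if_neg (by simp)] at h
    simp at h

/-- The labeling function of `node f ts`. -/
def nodeLabel (f : σ.symb) (ts : Fin (σ.ar f) → Coterm σ X) :
    List ℕ → Option (σ.symb ⊕ X)
  | [] => some (Sum.inl f)
  | i :: q => if h : i < σ.ar f then (ts ⟨i, h⟩).label q else none

/-- The Σ-operations on coterms: `node f ts` is the tree with root label `f`
and children `ts`. -/
def node (f : σ.symb) (ts : Fin (σ.ar f) → Coterm σ X) : Coterm σ X where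
  label := nodeLabel f ts
  consistent := by
    intro p i hp
    cases p with
    | nil =>
      refine ⟨f, rfl, ?_⟩
      simp only [List.nil_append, nodeLabel] at hp
      by_contra hlt
      rw [dif_neg hlt] at hp
      simp at hp
    | cons j q =>
      simp only [List.cons_append, nodeLabel] at hp
      by_cases hj : j < σ.ar f
      · rw [dif_pos hj] at hp
        obtain ⟨g, hg, hi⟩ := (ts ⟨j, hj⟩).consistent q i hp
        exact ⟨g, by simp only [nodeLabel, dif_pos hj]; exact hg, hi⟩
      · rw [dif_neg hj] at hp
        simp at hp

/-- A coterm is finite if it has finitely many positions;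
`FT(X)` is the set of finite partial terms. -/
def IsFinite (t : Coterm σ X) : Prop := {p : List ℕ | (t.label p).isSome}.Finite

/-- `s ≪ t`: `s` is finite and is obtained from `t` by deleting subterms. -/
def Ll (s t : Coterm σ X) : Prop := s.IsFinite ∧ s ≤ t

/-- Relabeling of variables along a map `h : X → Y`; this is the unique
ω-continuous algebra morphism `CT(X) → CT(Y)` extending `x ↦ h x` (viewing
variables of `Y` as coterms), and also gives the functorial action of the
coterm monad. -/
def rename (h : X → Y) (t : Coterm σ X) : Coterm σ Y where
  label p := (t.label p).map (Sum.map id h)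
  consistent := by
    intro p i hp
    try simp only at hp ⊢
    rw [Option.isSome_map] at hp
    obtain ⟨f, hf, hi⟩ := t.consistent p i hp
    exact ⟨f, by rw [hf]; rfl, hi⟩

end Coterm

/-- `g : CT(X) → CT(Y)` is a morphism of ω-continuous algebras: strict,
monotone, commuting with the Σ-operations, and preserving suprema of countable
directed sets. -/
structure IsOmegaContMorphism {σ : Signature} {X Y : Type*}
    (g : Coterm σ X → Coterm σ Y) : Prop where
  monotone : Monotone g
  strict : g ⊥ = ⊥
  ops : ∀ (f : σ.symb) (ts : Fin (σ.ar f) → Coterm σ X),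
    g (Coterm.node f ts) = Coterm.node f (fun i => g (ts i))
  cont : ∀ S : Set (Coterm σ X), S.Countable → S.Nonempty →
    DirectedOn (· ≤ ·) S → ∀ t, IsLUB S t → IsLUB (g '' S) (g t)

/-- A quasi-regular family: an assignment to each set `X` of an ordered
subalgebra `ΔX` of `CT(X)` containing the variables, such that for every
ω-continuous morphism `h : CT(X) → CT(Y)` with `h(X) ⊆ ΔY` one has
`h(ΔX) ⊆ ΔY`. -/
structure QuasiRegular (σ : Signature) where
  Del : (X : Type) → Set (Coterm σ X)
  bot_mem : ∀ X : Type, (⊥ : Coterm σ X) ∈ Del X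
  var_mem : ∀ (X : Type) (x : X), Coterm.var x ∈ Del X
  op_closed : ∀ (X : Type) (f : σ.symb) (ts : Fin (σ.ar f) → Coterm σ X),
    (∀ i, ts i ∈ Del X) → Coterm.node f ts ∈ Del X
  stable : ∀ (X Y : Type) (g : Coterm σ X → Coterm σ Y),
    IsOmegaContMorphism g → (∀ x : X, g (Coterm.var x) ∈ Del Y) →
    ∀ t ∈ Del X, g t ∈ Del Y

/-- An ordered Σ-algebra structure on a pointed poset `A`. -/
structure OrderedAlg (σ : Signature) (A : Type*) [PartialOrder A] [OrderBot A] where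
  op : ∀ f : σ.symb, (Fin (σ.ar f) → A) → A
  mono : ∀ f (a b : Fin (σ.ar f) → A), (∀ i, a i ≤ b i) → op f a ≤ op f b

/-- `S` is an ω-ideal relative to the ambient set `U`. -/
def IsOmegaIdealIn {α : Type*} [Preorder α] (U : Set α) (S : Set α) : Prop :=
  S ⊆ U ∧ ∃ C : Set α, C ⊆ S ∧ C.Countable ∧ C.Nonempty ∧ DirectedOn (· ≤ ·) C ∧
    S = {x ∈ U | ∃ c ∈ C, x ≤ c}

/-- `S` is an ω-ideal: the down-closure of a countable directed set. -/
def IsOmegaIdeal {α : Type*} [Preorder α] (S : Set α) : Prop :=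
  IsOmegaIdealIn Set.univ S

/-- `β : FT(A) → A` interprets finite partial terms over `A` in the ordered
algebra `(A, alg)`: it is the structure map of `A` as an Eilenberg–Moore
algebra for the finite partial term monad.  (The value of `β` on non-finite
coterms is irrelevant.) -/
def IsFinInterp {σ : Signature} {A : Type*} [PartialOrder A] [OrderBot A]
    (alg : OrderedAlg σ A) (β : Coterm σ A → A) : Prop :=
  (β ⊥ = ⊥) ∧
  (∀ a : A, β (Coterm.var a) = a) ∧
  (∀ (f : σ.symb) (ts : Fin (σ.ar f) → Coterm σ A), (∀ i, (ts i).IsFinite) →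
    β (Coterm.node f ts) = alg.op f (fun i => β (ts i))) ∧
  (∀ s s' : Coterm σ A, s.IsFinite → s'.IsFinite → s ≤ s' → β s ≤ β s')

/-- A Δ-set in `A` (w.r.t. the interpretation `β`): the set of values of the
finite approximants of some term `t ∈ ΔA`. -/
def IsDelSet {σ : Signature} (Q : QuasiRegular σ) {A : Type} [PartialOrder A]
    [OrderBot A] (β : Coterm σ A → A) (D : Set A) : Prop :=
  ∃ t ∈ Q.Del A, D = {x : A | ∃ s, Coterm.Ll s t ∧ x = β s}

/-- `A` is a Δ-regular algebra with (extended) structure map `β : ΔA → A`: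
`β` interprets finite terms, the supremum of each Δ-set
`{β(s) : s ≪ t}` (for `t ∈ ΔA`) exists and equals `β(t)`
(this is the extension `β(t) = ⋁{β(s) : s ≪ t}`), and the algebraic
operations preserve suprema of Δ-sets. -/
def IsDelStructure {σ : Signature} (Q : QuasiRegular σ) {A : Type}
    [PartialOrder A] [OrderBot A] (alg : OrderedAlg σ A)
    (β : Coterm σ A → A) : Prop :=
  IsFinInterp alg β ∧
  (∀ t ∈ Q.Del A, IsLUB {x : A | ∃ s, Coterm.Ll s t ∧ x = β s} (β t)) ∧
  (∀ (f : σ.symb) (as : Fin (σ.ar f) → A) (i : Fin (σ.ar f)),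
    ∀ t ∈ Q.Del A,
      IsLUB {x : A | ∃ s, Coterm.Ll s t ∧
          x = alg.op f (Function.update as i (β s))}
        (alg.op f (Function.update as i (β t))))

/-- The multiplication (substitution/flattening) of the coterm monad,
characterized as the unique ω-continuous morphism `CT(CT X) → CT X` sending
each variable `s ∈ CT X` to `s` itself. -/
def IsFlatten {σ : Signature} {X : Type*}
    (flat : Coterm σ (Coterm σ X) → Coterm σ X) : Prop :=
  IsOmegaContMorphism flat ∧ ∀ s : Coterm σ X, flat (Coterm.var s) = s

/-! A morphism `h` turns each finite approximant `s ≪ t` into the finite approximant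
`rename h s ≪ rename h t`, and every finite approximant of `rename h t` arises this way:
it is the image of the restriction of `t` to the (finitely many) positions of that
approximant. Hence `h` maps the Δ-set of `t ∈ ΔA` onto the Δ-set of `rename h t`, which
lies in `ΔB` because renaming is an ω-continuous morphism, and whose supremum is
`β (rename h t) = h (α t)`. -/

namespace Coterm

variable {σ : Signature} {X Y : Type*}

def dom (t : Coterm σ X) : Set (List ℕ) := {p | (t.label p).isSome}

theorem mem_dom {t : Coterm σ X} {p : List ℕ} : p ∈ t.dom ↔ (t.label p).isSome :=
  Iff.rfl

theorem mem_dom_of_append_singleton (t : Coterm σ X) (p : List ℕ) (i : ℕ)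
    (h : p ++ [i] ∈ t.dom) : p ∈ t.dom := by
  obtain ⟨f, hf, -⟩ := t.consistent p i h
  simp [mem_dom, hf]

theorem mem_dom_of_append_mem_dom (t : Coterm σ X) (p q : List ℕ)
    (h : p ++ q ∈ t.dom) : p ∈ t.dom := by
  induction q using List.reverseRecOn with
  | nil => simpa using h
  | append_singleton q i ih =>
    rw [← List.append_assoc] at h
    exact ih (t.mem_dom_of_append_singleton _ i h)

theorem label_eq_of_le_of_mem_dom {s t : Coterm σ X} (hst : s ≤ t) {p : List ℕ}
    (hp : p ∈ s.dom) : s.label p = t.label p := by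
  obtain ⟨v, hv⟩ := Option.isSome_iff_exists.mp hp
  rw [hv, hst p v hv]

theorem label_nil_of_cons_mem_dom (t : Coterm σ X) {i : ℕ} {q : List ℕ}
    (h : i :: q ∈ t.dom) : ∃ f, t.label [] = some (Sum.inl f) ∧ i < σ.ar f :=
  t.consistent [] i (t.mem_dom_of_append_mem_dom ([] ++ [i]) q h)

theorem eq_bot_of_label_nil (t : Coterm σ X) (h : t.label [] = none) : t = ⊥ := by
  refine ext' (funext fun p => Option.not_isSome_iff_eq_none.mp fun hp => ?_)
  have := t.mem_dom_of_append_mem_dom [] p hp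
  simp [mem_dom, h] at this

theorem eq_var_of_label_nil (t : Coterm σ X) {x : X}
    (h : t.label [] = some (Sum.inr x)) : t = var x := by
  refine ext' (funext fun p => ?_)
  cases p with
  | nil => simpa [var]
  | cons i q =>
    simp only [var, reduceCtorEq, if_false]
    refine Option.not_isSome_iff_eq_none.mp fun hp => ?_
    obtain ⟨f, hf, -⟩ := t.label_nil_of_cons_mem_dom hp
    simp [h] at hf

def child (t : Coterm σ X) (i : ℕ) : Coterm σ X where
  label q := t.label (i :: q)
  consistent p j hp := t.consistent (i :: p) j hp

theorem eq_node_child (t : Coterm σ X) {f : σ.symb}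
    (h : t.label [] = some (Sum.inl f)) : t = node f (fun i => t.child i) := by
  refine ext' (funext fun p => ?_)
  cases p with
  | nil => exact h
  | cons i q =>
    show t.label (i :: q) = nodeLabel f (fun j => t.child j) (i :: q)
    by_cases hi : i < σ.ar f
    · simp only [nodeLabel, dif_pos hi]; rfl
    · simp only [nodeLabel, dif_neg hi]
      refine Option.not_isSome_iff_eq_none.mp fun hp => hi ?_
      obtain ⟨g, hg, hig⟩ := t.label_nil_of_cons_mem_dom hp
      obtain rfl : f = g := by simpa [h] using hg
      exact hig

open Classical in
noncomputable def restrict (t : Coterm σ X) (P : Set (List ℕ))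
    (hP : ∀ p i, p ++ [i] ∈ P → p ∈ P) : Coterm σ X where
  label p := if p ∈ P then t.label p else none
  consistent p i hp := by
    split_ifs at hp with hpi
    · obtain ⟨f, hf, hi⟩ := t.consistent p i hp
      exact ⟨f, by rw [if_pos (hP p i hpi), hf], hi⟩
    · simp at hp

section restrict

variable (t : Coterm σ X) {P : Set (List ℕ)} (hP : ∀ p i, p ++ [i] ∈ P → p ∈ P)

theorem restrict_label_of_mem {p : List ℕ} (hp : p ∈ P) :
    (t.restrict P hP).label p = t.label p := by
  classical
  simp [restrict, hp]

theorem restrict_label_of_notMem {p : List ℕ} (hp : p ∉ P) :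
    (t.restrict P hP).label p = none := by
  classical
  simp [restrict, hp]

theorem dom_restrict_subset : (t.restrict P hP).dom ⊆ P := fun p hp => by
  by_contra hpP
  simp [mem_dom, t.restrict_label_of_notMem hP hpP] at hp

theorem restrict_le : t.restrict P hP ≤ t := fun p v hv => by
  by_cases hp : p ∈ P
  · rwa [t.restrict_label_of_mem hP hp] at hv
  · simp [t.restrict_label_of_notMem hP hp] at hv

theorem isFinite_restrict (hfin : P.Finite) : (t.restrict P hP).IsFinite :=
  hfin.subset (t.dom_restrict_subset hP)

theorem restrict_dom_of_le {s : Coterm σ X} (hst : s ≤ t) :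
    t.restrict s.dom s.mem_dom_of_append_singleton = s := by
  refine ext' (funext fun p => ?_)
  by_cases hp : p ∈ s.dom
  · rw [t.restrict_label_of_mem _ hp, label_eq_of_le_of_mem_dom hst hp]
  · rw [t.restrict_label_of_notMem _ hp, Option.not_isSome_iff_eq_none.mp hp]

end restrict

/-- Otherwise restricting `t` to the positions of the members of `S` would give a smaller
upper bound. -/
theorem exists_mem_dom_of_isLUB {S : Set (Coterm σ X)} {t : Coterm σ X} (ht : IsLUB S t)
    {p : List ℕ} (hp : p ∈ t.dom) : ∃ s ∈ S, p ∈ s.dom := by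
  let P := {p | ∃ s ∈ S, p ∈ s.dom}
  have hP : ∀ p i, p ++ [i] ∈ P → p ∈ P := fun p i ⟨s, hs, hpi⟩ =>
    ⟨s, hs, s.mem_dom_of_append_singleton p i hpi⟩
  have hub : t.restrict P hP ∈ upperBounds S := fun s hs q v hv => by
    have hq : q ∈ P := ⟨s, hs, by simp [mem_dom, hv]⟩
    rw [t.restrict_label_of_mem hP hq]
    exact ht.1 hs q v hv
  by_contra hpP
  obtain ⟨v, hv⟩ := Option.isSome_iff_exists.mp hp
  simpa [t.restrict_label_of_notMem hP hpP] using ht.2 hub p v hv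

@[simp] theorem rename_label (h : X → Y) (t : Coterm σ X) (p : List ℕ) :
    (rename h t).label p = (t.label p).map (Sum.map id h) := rfl

theorem IsFinite.rename (h : X → Y) {t : Coterm σ X} (ht : t.IsFinite) :
    (t.rename h).IsFinite := by
  simpa [IsFinite, ← mem_dom] using ht

theorem rename_mono (h : X → Y) : Monotone (rename (σ := σ) h) := fun s t hst p v hv => by
  obtain ⟨w, hw, rfl⟩ := Option.map_eq_some_iff.mp hv
  simp [hst p w hw]

theorem rename_bot (h : X → Y) : rename (σ := σ) h ⊥ = ⊥ := rfl

theorem rename_var (h : X → Y) (x : X) : rename (σ := σ) h (var x) = var (h x) := by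
  refine ext' (funext fun p => ?_)
  by_cases hp : p = [] <;> simp [var, hp]

theorem rename_node (h : X → Y) (f : σ.symb) (ts : Fin (σ.ar f) → Coterm σ X) :
    rename h (node f ts) = node f (fun i => rename h (ts i)) := by
  refine ext' (funext fun p => ?_)
  cases p with
  | nil => rfl
  | cons i q =>
    show (nodeLabel f ts (i :: q)).map (Sum.map id h)
      = nodeLabel f (fun i => rename h (ts i)) (i :: q)
    simp only [nodeLabel]
    split_ifs <;> rfl

theorem rename_restrict (h : X → Y) (t : Coterm σ X) {P : Set (List ℕ)}
    (hP : ∀ p i, p ++ [i] ∈ P → p ∈ P) :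
    rename h (t.restrict P hP) = (rename h t).restrict P hP := by
  refine ext' (funext fun p => ?_)
  by_cases hp : p ∈ P
  · simp [restrict_label_of_mem _ hP hp]
  · simp [restrict_label_of_notMem _ hP hp]

theorem isLUB_rename (h : X → Y) {S : Set (Coterm σ X)} {t : Coterm σ X} (ht : IsLUB S t) :
    IsLUB (rename h '' S) (rename h t) := by
  refine ⟨(rename_mono h).mem_upperBounds_image ht.1, fun u hu p v hv => ?_⟩
  have hp : p ∈ t.dom := by simpa [mem_dom] using congrArg Option.isSome hv
  obtain ⟨s, hs, hps⟩ := exists_mem_dom_of_isLUB ht hp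
  refine hu ⟨s, hs, rfl⟩ p v ?_
  rwa [rename_label, label_eq_of_le_of_mem_dom (ht.1 hs) hps]

theorem rename_isOmegaContMorphism (h : X → Y) : IsOmegaContMorphism (rename (σ := σ) h) :=
  ⟨rename_mono h, rename_bot h, rename_node h, fun _ _ _ _ _ => isLUB_rename h⟩

theorem ll_rename_iff (h : X → Y) {t : Coterm σ X} {s' : Coterm σ Y} :
    Ll s' (rename h t) ↔ ∃ s, Ll s t ∧ rename h s = s' := by
  constructor
  · rintro ⟨hfin, hle⟩
    refine ⟨t.restrict s'.dom s'.mem_dom_of_append_singleton,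
      ⟨t.isFinite_restrict _ hfin, t.restrict_le _⟩, ?_⟩
    rw [rename_restrict, restrict_dom_of_le _ hle]
  · rintro ⟨s, ⟨hfin, hle⟩, rfl⟩
    exact ⟨hfin.rename h, rename_mono h hle⟩

end Coterm

namespace QuasiRegular

variable {σ : Signature} (Q : QuasiRegular σ) {X Y : Type}

theorem mem_Del_of_length_lt (n : ℕ) (s : Coterm σ X)
    (hs : ∀ p ∈ s.dom, p.length < n) : s ∈ Q.Del X := by
  induction n generalizing s with
  | zero =>
    have h : s.label [] = none := Option.not_isSome_iff_eq_none.mp fun h => by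
      simpa using hs [] h
    rw [s.eq_bot_of_label_nil h]
    exact Q.bot_mem X
  | succ n ih =>
    cases h : s.label [] with
    | none => rw [s.eq_bot_of_label_nil h]; exact Q.bot_mem X
    | some v =>
      cases v with
      | inr x => rw [s.eq_var_of_label_nil h]; exact Q.var_mem X x
      | inl f =>
        rw [s.eq_node_child h]
        refine Q.op_closed X f _ fun i => ih _ fun q hq => ?_
        simpa using hs (i :: q) hq

theorem mem_Del_of_isFinite {s : Coterm σ X} (hs : s.IsFinite) : s ∈ Q.Del X := by
  obtain ⟨n, hn⟩ := (hs.image List.length).bddAbove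
  exact Q.mem_Del_of_length_lt (n + 1) s fun p hp =>
    Nat.lt_succ_of_le (hn ⟨p, hp, rfl⟩)

theorem rename_mem_Del (h : X → Y) {t : Coterm σ X} (ht : t ∈ Q.Del X) :
    Coterm.rename h t ∈ Q.Del Y :=
  Q.stable X Y _ (Coterm.rename_isOmegaContMorphism h)
    (fun x => by rw [Coterm.rename_var]; exact Q.var_mem Y (h x)) t ht

end QuasiRegular

theorem image_delSet_eq {σ : Signature} (Q : QuasiRegular σ) {A B : Type}
    {α : Coterm σ A → A} {β : Coterm σ B → B} {h : A → B}
    (hcomm : ∀ t ∈ Q.Del A, h (α t) = β (Coterm.rename h t)) (t : Coterm σ A) :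
    h '' {x | ∃ s, Coterm.Ll s t ∧ x = α s}
      = {y | ∃ s', Coterm.Ll s' (Coterm.rename h t) ∧ y = β s'} := by
  ext y
  simp only [Set.mem_image, Set.mem_ofPred_eq, Coterm.ll_rename_iff]
  constructor
  · rintro ⟨_, ⟨s, hs, rfl⟩, rfl⟩
    exact ⟨_, ⟨s, hs, rfl⟩, hcomm s (Q.mem_Del_of_isFinite hs.1)⟩
  · rintro ⟨_, ⟨s, hs, rfl⟩, rfl⟩
    exact ⟨α s, ⟨s, hs, rfl⟩, hcomm s (Q.mem_Del_of_isFinite hs.1)⟩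

theorem stmt_12_general (σ : Signature) (Q : QuasiRegular σ) (A B : Type)
    [PartialOrder A] [OrderBot A] [PartialOrder B] [OrderBot B]
    (algB : OrderedAlg σ B)
    (α : Coterm σ A → A)
    (β : Coterm σ B → B) (hβ : IsDelStructure Q algB β)
    (h : A → B)
    (hcomm : ∀ t ∈ Q.Del A, h (α t) = β (Coterm.rename h t)) :
    ∀ t ∈ Q.Del A,
      IsDelSet Q β (h '' {x : A | ∃ s, Coterm.Ll s t ∧ x = α s}) ∧
      IsLUB (h '' {x : A | ∃ s, Coterm.Ll s t ∧ x = α s}) (h (α t)) := by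
  intro t ht
  have hrt : Coterm.rename h t ∈ Q.Del B := Q.rename_mem_Del h ht
  rw [image_delSet_eq Q hcomm t, hcomm t ht]
  exact ⟨⟨_, hrt, rfl⟩, hβ.2.1 _ hrt⟩

/-- Let `(A, α)` and `(B, β)` be Δ-algebras and `h : A → B`
a Δ-algebra morphism (a strict monotone map commuting with the structure
maps).  Then the image of any Δ-set `D ⊆ A` is a Δ-set in `B`, and
`h(⋁D) = ⋁h(D)`: morphisms of Δ-algebras automatically preserve suprema of
Δ-sets. -/
theorem stmt_12 (σ : Signature) (Q : QuasiRegular σ) (A B : Type)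
    [PartialOrder A] [OrderBot A] [PartialOrder B] [OrderBot B]
    (algA : OrderedAlg σ A) (algB : OrderedAlg σ B)
    (α : Coterm σ A → A) (hα : IsDelStructure Q algA α)
    (β : Coterm σ B → B) (hβ : IsDelStructure Q algB β)
    (h : A → B) (hbot : h ⊥ = ⊥) (hmono : Monotone h)
    (hcomm : ∀ t ∈ Q.Del A, h (α t) = β (Coterm.rename h t)) :
    ∀ t ∈ Q.Del A,
      IsDelSet Q β (h '' {x : A | ∃ s, Coterm.Ll s t ∧ x = α s}) ∧
      IsLUB (h '' {x : A | ∃ s, Coterm.Ll s t ∧ x = α s}) (h (α t)) :=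
  stmt_12_general σ Q A B algB α β hβ h hcomm
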